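/- In a complex spin factor V, if p = (1 + i b)/2 and q = (1 + i c)/2 are minimal projections (with b, c fixed by the conjugation, norm one, orthogonal to 1), then ‖p − q‖ = ½‖b − c‖ in the spin factor norm; consequently ‖p − q‖ = 1 if and only if c = −b, i.e., q = 1 − p. -/

import Mathlib

/-!
`p - q = (i/2) • (b - c)` is a scalar multiple of the self-conjugate vector `b - c`, and every such
multiple `a` satisfies `|⟨ā|a⟩| = ⟨a|a⟩`, so the inner square root in the spin-factor norm vanishes
and the spin-factor norm of `p - q` is its Hilbert norm. For unit vectors, `‖b - c‖ = 2` is the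
equality case of the triangle inequality, which by strict convexity forces `c = -b`.
-/

/-- A (complex) spin factor structure on a complex Hilbert space `V`:
a conjugation (conjugate-linear isometry of period 2) together with a distinguished
norm-one element `one` fixed by the conjugation. Here `⟨a|b⟩` of the literature
(linear in the first variable) corresponds to `inner b a` in Mathlib. -/
structure SpinFactor (V : Type*) [NormedAddCommGroup V] [InnerProductSpace ℂ V] where
  conj : V → V
  conj_add : ∀ x y : V, conj (x + y) = conj x + conj y
  conj_smul : ∀ (c : ℂ) (x : V), conj (c • x) = (starRingEnd ℂ c) • conj x
  conj_conj : ∀ x : V, conj (conj x) = x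
  conj_isometry : ∀ x : V, ‖conj x‖ = ‖x‖
  one : V
  norm_one : ‖one‖ = 1
  conj_one : conj one = one

namespace SpinFactor

variable {V : Type*} [NormedAddCommGroup V] [InnerProductSpace ℂ V] (S : SpinFactor V)

/-- The Jordan product `a ∘ b = ⟨a|1⟩b + ⟨b|1⟩a − ⟨a|b̄⟩1` of the spin factor. -/
noncomputable def jmul (a b : V) : V :=
  (inner ℂ S.one a : ℂ) • b + (inner ℂ S.one b : ℂ) • a - (inner ℂ (S.conj b) a : ℂ) • S.one

/-- The involution `a* = 2⟨1|a⟩1 − ā` of the spin factor. -/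
noncomputable def jstar (a : V) : V := (2 * (inner ℂ a S.one : ℂ)) • S.one - S.conj a

/-- The spin factor norm: `‖a‖² = ⟨a|a⟩ + (⟨a|a⟩² − |⟨a|ā⟩|²)^{1/2}`. -/
noncomputable def snorm (a : V) : ℝ :=
  Real.sqrt (‖a‖ ^ 2 + Real.sqrt ((‖a‖ ^ 2) ^ 2 - ‖(inner ℂ (S.conj a) a : ℂ)‖ ^ 2))

/-- Projections of the spin factor: self-adjoint Jordan idempotents. -/
def IsProjection (p : V) : Prop := S.jmul p p = p ∧ S.jstar p = p

end SpinFactor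

theorem eq_neg_iff_norm_sub_eq_add_of_norm_eq {E : Type*} [NormedAddCommGroup E]
    [NormedSpace ℝ E] [StrictConvexSpace ℝ E] {x y : E} (h : ‖x‖ = ‖y‖) :
    ‖x - y‖ = ‖x‖ + ‖y‖ ↔ y = -x := by
  constructor
  · intro hsub
    rw [sub_eq_add_neg, ← norm_neg y] at hsub
    have hx : x = -y := eq_of_norm_eq_of_norm_add_eq (h.trans (norm_neg y).symm) hsub
    exact (neg_eq_iff_eq_neg.mpr hx).symm
  · rintro rfl
    rw [sub_neg_eq_add, ← two_smul ℝ, norm_smul, norm_neg, Real.norm_two, two_mul]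

theorem inv_two_smul_add_I_smul_eq_sub_iff {M : Type*} [AddCommGroup M] [Module ℂ M]
    (x b c : M) :
    (2 : ℂ)⁻¹ • (x + Complex.I • c) = x - (2 : ℂ)⁻¹ • (x + Complex.I • b) ↔ c = -b := by
  constructor
  · intro h
    have hsum : ((2 : ℂ)⁻¹ * Complex.I) • (c + b) = 0 := by
      linear_combination (norm := module) h
    rw [smul_eq_zero_iff_right (by simp [Complex.I_ne_zero])] at hsum
    exact eq_neg_of_add_eq_zero_left hsum
  · rintro rfl
    module

namespace SpinFactor

variable {V : Type*} [NormedAddCommGroup V] [InnerProductSpace ℂ V] (S : SpinFactor V)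

theorem conj_sub (x y : V) : S.conj (x - y) = S.conj x - S.conj y :=
  eq_sub_of_add_eq (by rw [← S.conj_add, sub_add_cancel])

theorem snorm_eq_norm_of_norm_inner_conj_self {a : V}
    (h : ‖(inner ℂ (S.conj a) a : ℂ)‖ = ‖a‖ ^ 2) : S.snorm a = ‖a‖ := by
  rw [snorm, h, sub_self, Real.sqrt_zero, add_zero, Real.sqrt_sq (norm_nonneg a)]

theorem norm_inner_conj_smul_self_of_conj_eq {a : V} (ha : S.conj a = a) (z : ℂ) :
    ‖(inner ℂ (S.conj (z • a)) (z • a) : ℂ)‖ = ‖z • a‖ ^ 2 := by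
  rw [S.conj_smul, ha, inner_smul_left, inner_smul_right, Complex.conj_conj,
    inner_self_eq_norm_sq_to_K, norm_smul]
  simp only [norm_mul, norm_pow, RCLike.norm_ofReal, abs_norm]
  ring

theorem snorm_smul_of_conj_eq {a : V} (ha : S.conj a = a) (z : ℂ) :
    S.snorm (z • a) = ‖z‖ * ‖a‖ := by
  rw [S.snorm_eq_norm_of_norm_inner_conj_self (S.norm_inner_conj_smul_self_of_conj_eq ha z),
    norm_smul]

end SpinFactor

theorem spinFactor_dist_minimal_projections_general
    {V : Type*} [NormedAddCommGroup V] [InnerProductSpace ℂ V]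
    (S : SpinFactor V) (b c : V)
    (hb : S.conj b = b) (hc : S.conj c = c) (hb1 : ‖b‖ = 1) (hc1 : ‖c‖ = 1)
    (p q : V) (hp : p = (2 : ℂ)⁻¹ • (S.one + Complex.I • b))
    (hq : q = (2 : ℂ)⁻¹ • (S.one + Complex.I • c)) :
    S.snorm (p - q) = (1 / 2) * ‖b - c‖ ∧
      (S.snorm (p - q) = 1 ↔ c = -b) ∧ (S.snorm (p - q) = 1 ↔ q = S.one - p) := by
  have hpq : p - q = ((2 : ℂ)⁻¹ * Complex.I) • (b - c) := by
    rw [hp, hq]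
    module
  have hdist : S.snorm (p - q) = (1 / 2) * ‖b - c‖ := by
    rw [hpq, S.snorm_smul_of_conj_eq (by rw [S.conj_sub, hb, hc])]
    simp
  have hunit : S.snorm (p - q) = 1 ↔ c = -b := by
    -- `StrictConvexSpace ℝ V` comes from the underlying real inner product space
    let _ := InnerProductSpace.rclikeToReal ℂ V
    rw [hdist, ← eq_neg_iff_norm_sub_eq_add_of_norm_eq (hb1.trans hc1.symm), hb1, hc1]
    constructor <;> intro h <;> linarith
  refine ⟨hdist, hunit, hunit.trans ?_⟩
  rw [hp, hq, inv_two_smul_add_I_smul_eq_sub_iff]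

/-- For minimal projections `p = (1 + i b)/2` and `q = (1 + i c)/2` of a complex spin factor,
the spin-factor distance is `‖p − q‖ = ½‖b − c‖` (Hilbert norm); consequently `‖p − q‖ = 1`
iff `c = −b`, i.e. iff `q = 1 − p`. -/
theorem spinFactor_dist_minimal_projections
    {V : Type*} [NormedAddCommGroup V] [InnerProductSpace ℂ V] [CompleteSpace V]
    (S : SpinFactor V) (b c : V)
    (hb : S.conj b = b) (hc : S.conj c = c) (hb1 : ‖b‖ = 1) (hc1 : ‖c‖ = 1)
    (hbo : (inner ℂ S.one b : ℂ) = 0) (hco : (inner ℂ S.one c : ℂ) = 0)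
    (p q : V) (hp : p = (2 : ℂ)⁻¹ • (S.one + Complex.I • b))
    (hq : q = (2 : ℂ)⁻¹ • (S.one + Complex.I • c)) :
    S.snorm (p - q) = (1 / 2) * ‖b - c‖ ∧
      (S.snorm (p - q) = 1 ↔ c = -b) ∧ (S.snorm (p - q) = 1 ↔ q = S.one - p) :=
  spinFactor_dist_minimal_projections_general S b c hb hc hb1 hc1 p q hp hq
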